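/- arXiv:0910.4112 — 4 statements merged into one kernel-verified Lean document; each statement's English description precedes it below -/
import Mathlib

section
/- A subset A of the ground set S of a matroid M is a nonempty union of circuits of M if and only if S \ A is a proper flat of the dual matroid M*. -/
/-- A circuit of a matroid: a minimal dependent subset of the ground set. -/
def Matroid.MCircuit {α : Type*} (M : Matroid α) (C : Set α) : Prop :=
  C ⊆ M.E ∧ ¬ M.Indep C ∧ ∀ D : Set α, D ⊂ C → M.Indep D

open Set

namespace Matroid

variable {α : Type*} {M : Matroid α}

/-- Every dependent subset of a finite ground set contains a circuit. -/
lemma exists_mcircuit_subset (hfin : M.E.Finite) {D : Set α} (hDE : D ⊆ M.E)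
    (hdep : ¬ M.Indep D) : ∃ C ⊆ D, M.MCircuit C := by
  obtain ⟨n, hn⟩ : ∃ n, D.ncard = n := ⟨_, rfl⟩
  induction n using Nat.strong_induction_on generalizing D with
  | _ n IH =>
    by_cases h : ∀ D', D' ⊂ D → M.Indep D'
    · exact ⟨D, Subset.rfl, hDE, hdep, h⟩
    · push_neg at h
      obtain ⟨D', hss, hdep'⟩ := h
      obtain ⟨C, hCD', hC⟩ := IH _ (hn ▸ Set.ncard_lt_ncard hss (hfin.subset hDE))
        (hss.subset.trans hDE) hdep' rfl
      exact ⟨C, hCD'.trans hss.subset, hC⟩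

/-- An element is in the closure of a set iff it lies on a circuit through it. -/
lemma mem_closure_iff_exists_mcircuit (hfin : M.E.Finite) {X : Set α} {e : α}
    (hX : X ⊆ M.E) (he : e ∈ M.E) (heX : e ∉ X) :
    e ∈ M.closure X ↔ ∃ C, M.MCircuit C ∧ C ⊆ insert e X ∧ e ∈ C := by
  constructor
  · intro hecl
    obtain ⟨I, hI⟩ := M.exists_isBasis X hX
    have heI : e ∈ M.closure I := by rwa [hI.closure_eq_closure]
    have heI' : e ∉ I := fun h => heX (hI.subset h)
    have hdep : ¬ M.Indep (insert e I) := (hI.indep.insert_dep_iff.2 ⟨heI, heI'⟩).1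
    obtain ⟨C, hCsub, hC⟩ := exists_mcircuit_subset hfin
      (insert_subset he hI.indep.subset_ground) hdep
    refine ⟨C, hC, hCsub.trans (insert_subset_insert hI.subset), ?_⟩
    by_contra heC
    have hCI : C ⊆ I := fun x hx => (hCsub hx).elim (fun h => absurd (h ▸ hx) heC) id
    exact hC.2.1 (hI.indep.subset hCI)
  · rintro ⟨C, hC, hCsub, heC⟩
    have hCe : M.Indep (C \ {e}) := hC.2.2 _ ⟨diff_subset, fun h => (h heC).2 rfl⟩
    have hdep : ¬ M.Indep (insert e (C \ {e})) := by
      rw [insert_diff_singleton, insert_eq_of_mem heC]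
      exact hC.2.1
    have hdd : M.Dep (insert e (C \ {e})) :=
      ⟨hdep, insert_subset he (diff_subset.trans hC.1)⟩
    have hcl : e ∈ M.closure (C \ {e}) := (hCe.insert_dep_iff.1 hdd).1
    refine M.closure_subset_closure (fun x hx => ?_) hcl
    exact (hCsub hx.1).elim (fun h => absurd h hx.2) id

/-- The key duality: `e` is in the dual closure of `X` iff it is not in the closure of the
complement of `insert e X`. -/
lemma dual_closure_lemma (M : Matroid α) {X : Set α} {e : α}
    (hX : X ⊆ M.E) (he : e ∈ M.E) (heX : e ∉ X) :
    e ∈ M✶.closure X ↔ e ∉ M.closure ((M.E \ X) \ {e}) := by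
  have hY : (M.E \ X) \ {e} ⊆ M.E := diff_subset.trans diff_subset
  have haux1 : e ∈ M.closure ((M.E \ X) \ {e}) → e ∉ M✶.closure X := by
    intro hecl hecl'
    obtain ⟨J, hJ⟩ := M✶.exists_isBasis X hX
    have hJX : J ⊆ X := hJ.subset
    have hco : M.Coindep J := hJ.indep
    have hsp : M.Spanning (M.E \ J) := hco.compl_spanning
    have heJ : e ∈ M.E \ J := ⟨he, fun h => heX (hJX h)⟩
    have hsub : (M.E \ X) \ {e} ⊆ (M.E \ J) \ {e} :=
      fun x hx => ⟨⟨hx.1.1, fun h => hx.1.2 (hJX h)⟩, hx.2⟩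
    have h1 : e ∈ M.closure ((M.E \ J) \ {e}) := M.closure_subset_closure hsub hecl
    have h2 : M.closure ((M.E \ J) \ {e}) = M.E := by
      have h3 := closure_insert_eq_of_mem_closure h1
      rw [insert_diff_singleton, insert_eq_of_mem heJ, hsp.closure_eq] at h3
      exact h3.symm
    have hsp' : M.Spanning ((M.E \ J) \ {e}) := by
      rw [spanning_iff_closure_eq (diff_subset.trans diff_subset)]
      exact h2
    have hind : M✶.Indep (insert e J) := by
      rw [← coindep_def, coindep_iff_compl_spanning (insert_subset he (hJX.trans hX))]
      rwa [← union_singleton, ← diff_diff]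
    have hclJ : e ∈ M✶.closure J := by rwa [hJ.closure_eq_closure]
    exact (hJ.indep.insert_dep_iff.2 ⟨hclJ, fun h => heX (hJX h)⟩).1 hind
  have haux2 : e ∉ M.closure ((M.E \ X) \ {e}) → e ∈ M✶.closure X := by
    intro hecl
    obtain ⟨I, hI⟩ := M.exists_isBasis ((M.E \ X) \ {e}) hY
    have heI' : e ∉ I := fun h => (hI.subset h).2 rfl
    have heIcl : e ∉ M.closure I := by rwa [hI.closure_eq_closure]
    have hIind : M.Indep (insert e I) :=
      (hI.indep.insert_indep_iff_of_notMem heI').2 ⟨he, heIcl⟩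
    obtain ⟨B, hB, hIB⟩ := hIind.exists_isBase_superset
    have heB : e ∈ B := hIB (mem_insert _ _)
    have hBI : B ∩ ((M.E \ X) \ {e}) = I := by
      refine (hI.eq_of_subset_indep (hB.indep.subset inter_subset_left)
        (subset_inter (fun x hx => hIB (mem_insert_of_mem _ hx)) hI.subset)
        inter_subset_right).symm
    have hJ' : M✶.Indep (X \ B) := by
      rw [dual_indep_iff_exists (diff_subset.trans hX)]
      exact ⟨B, hB, disjoint_sdiff_left⟩
    have hdep : ¬ M✶.Indep (insert e (X \ B)) := by
      intro hind
      obtain ⟨B', hB', hdisj⟩ := (dual_indep_iff_exists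
        (insert_subset he (diff_subset.trans hX))).1 hind
      have heB' : e ∉ B' := fun h => hdisj.ne_of_mem (mem_insert _ _) h rfl
      obtain ⟨f, hf, hBf⟩ := hB.exchange hB' ⟨heB, heB'⟩
      have hfX : f ∉ X := fun hfXmem =>
        hdisj.ne_of_mem (mem_insert_of_mem _ ⟨hfXmem, hf.2⟩) hf.1 rfl
      have hfe : f ≠ e := fun h => heB' (h ▸ hf.1)
      have hfY : f ∈ (M.E \ X) \ {e} := ⟨⟨hB'.subset_ground hf.1, hfX⟩, hfe⟩
      have hfI : f ∉ I := fun h => hf.2 (hIB (mem_insert_of_mem _ h))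
      have hIB' : insert f I ⊆ insert f (B \ {e}) :=
        insert_subset_insert (fun x hx => ⟨hIB (mem_insert_of_mem _ hx),
          fun h => heI' (h ▸ hx)⟩)
      have hindfI : M.Indep (insert f I) := hBf.indep.subset hIB'
      have : I = insert f I := hI.eq_of_subset_indep hindfI (subset_insert _ _)
        (insert_subset hfY hI.subset)
      exact hfI (this ▸ mem_insert _ _)
    have hdd : M✶.Dep (insert e (X \ B)) :=
      ⟨hdep, insert_subset he (diff_subset.trans hX)⟩
    have : e ∈ M✶.closure (X \ B) := (hJ'.insert_dep_iff.1 hdd).1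
    exact M✶.closure_subset_closure diff_subset this
  exact ⟨fun h h' => haux1 h' h, haux2⟩

lemma flat_iff_closure_eq {F : Set α} (hF : F ⊆ M.E) :
    M.IsFlat F ↔ M.closure F = F := by
  refine ⟨IsFlat.closure, fun h => ⟨fun I X hIF hIX => ?_, hF⟩⟩
  have hXcl := hIX.subset_closure
  rwa [hIF.closure_eq_closure, h] at hXcl

end Matroid

/-- A subset `A` of the ground set `S` of a matroid `M` is a nonempty union of circuits
of `M` if and only if `S \ A` is a proper flat of the dual matroid `M✶`. -/
theorem tflat_iff_dual_proper_flat {α : Type*} (M : Matroid α) (hfin : M.E.Finite)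
    (A : Set α) (hA : A ⊆ M.E) :
    (∃ 𝒞 : Set (Set α), 𝒞.Nonempty ∧ (∀ C ∈ 𝒞, M.MCircuit C) ∧ A = ⋃₀ 𝒞) ↔
      (M✶.IsFlat (M.E \ A) ∧ M.E \ A ≠ M.E) := by
  have hFE : M.E \ A ⊆ M✶.E := Set.diff_subset
  have hcompl : M.E \ (M.E \ A) = A := Set.diff_diff_cancel_left hA
  -- key pointwise equivalence, for e ∈ A
  have key : ∀ e ∈ A, ((∃ C, M.MCircuit C ∧ C ⊆ A ∧ e ∈ C) ↔ e ∉ M✶.closure (M.E \ A)) := by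
    intro e he
    have heE : e ∈ M.E := hA he
    have heF : e ∉ M.E \ A := fun h => h.2 he
    have h1 := M.dual_closure_lemma (X := M.E \ A) Set.diff_subset heE heF
    rw [hcompl] at h1
    have h2 := Matroid.mem_closure_iff_exists_mcircuit hfin (X := A \ {e})
      ((Set.diff_subset).trans hA) heE (fun h => h.2 rfl)
    rw [Set.insert_diff_singleton, Set.insert_eq_of_mem he] at h2
    rw [h1, not_not, h2]
  constructor
  · rintro ⟨𝒞, ⟨C0, hC0⟩, hall, hAeq⟩
    have hC0ne : C0.Nonempty := by
      rw [Set.nonempty_iff_ne_empty]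
      rintro rfl
      exact (hall _ hC0).2.1 M.empty_indep
    obtain ⟨c, hc⟩ := hC0ne
    have hcA : c ∈ A := hAeq ▸ ⟨C0, hC0, hc⟩
    have hne : M.E \ A ≠ M.E := by
      intro h
      have hcE : c ∈ M.E := hA hcA
      rw [← h] at hcE
      exact hcE.2 hcA
    refine ⟨(Matroid.flat_iff_closure_eq hFE).2 ?_, hne⟩
    refine subset_antisymm (fun x hx => ?_) (M✶.subset_closure _ hFE)
    have hxE : x ∈ M.E := M✶.closure_subset_ground _ hx
    by_contra hxF
    have hxA : x ∈ A := by
      by_contra hxA; exact hxF ⟨hxE, hxA⟩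
    refine (key x hxA).1 ?_ hx
    obtain ⟨C, hC𝒞, hxC⟩ := hAeq ▸ hxA
    exact ⟨C, hall _ hC𝒞, hAeq ▸ Set.subset_sUnion_of_mem hC𝒞, hxC⟩
  · rintro ⟨hflat, hne⟩
    have hAne : A.Nonempty := by
      rw [Set.nonempty_iff_ne_empty]
      rintro rfl
      exact hne (by rw [Set.diff_empty])
    have hclF : M✶.closure (M.E \ A) = M.E \ A := hflat.closure
    have hall : ∀ e ∈ A, ∃ C, M.MCircuit C ∧ C ⊆ A ∧ e ∈ C := by
      intro e he
      refine (key e he).2 (fun hmem => ?_)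
      rw [hclF] at hmem
      exact hmem.2 he
    refine ⟨{C | M.MCircuit C ∧ C ⊆ A}, ?_, fun C hC => hC.1, ?_⟩
    · obtain ⟨a, ha⟩ := hAne
      obtain ⟨C, hC, hCA, _⟩ := hall a ha
      exact ⟨C, hC, hCA⟩
    · refine subset_antisymm (fun e he => ?_) (Set.sUnion_subset (fun C hC => hC.2))
      obtain ⟨C, hC, hCA, heC⟩ := hall e he
      exact ⟨C, ⟨hC, hCA⟩, heC⟩
end

section
/- For every matroid M, the beta invariant β(M) is nonnegative. -/
open scoped Classical

/-- The rank of a subset `A` in a matroid `M`: the size of a largest independent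
subset of `A`. -/
noncomputable def Matroid.rk' {α : Type*} (M : Matroid α) (A : Set α) : ℕ :=
  sSup {n : ℕ | ∃ I : Set α, I ⊆ A ∧ M.Indep I ∧ I.ncard = n}

/-- `μ` is the Möbius function of the poset (under inclusion) of the members of the
finite family `Flats` of sets. -/
def IsMobiusOn {α : Type*} (Flats : Finset (Set α)) (μ : Set α → Set α → ℤ) : Prop :=
  (∀ F ∈ Flats, μ F F = 1) ∧
  (∀ F ∈ Flats, ∀ G ∈ Flats, F ⊂ G →
      ∑ H ∈ Flats.filter (fun H => F ⊆ H ∧ H ⊆ G), μ F H = 0) ∧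
  (∀ F G : Set α, ¬ F ⊆ G → μ F G = 0)

/-- The beta invariant of a matroid `M`, computed from its finite lattice `Flats` of
flats with Möbius function `μ`:
`β(M) = (-1)^{r(S)} ∑_{F ∈ L(M)} μ(0̂, F) · r(F)`, where `0̂ = closure ∅`. -/
noncomputable def betaInv {α : Type*} (M : Matroid α) (Flats : Finset (Set α))
    (μ : Set α → Set α → ℤ) : ℤ :=
  (-1 : ℤ) ^ (M.rk' M.E) * ∑ F ∈ Flats, μ (M.closure ∅) F * (M.rk' F : ℤ)

section AbstractLemma



lemma union_singleton_eq_insert {α : Type*} [DecidableEq α] (A : Finset α) (e : α) :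
    A ∪ {e} = insert e A := by
  ext x; simp [Finset.mem_union, Finset.mem_insert, or_comm]

lemma abstract_nonneg {α : Type*} [DecidableEq α] :
    ∀ (N : ℕ) (X : Finset α), X.card ≤ N → ∀ (r : Finset α → ℤ) (n : ℕ),
    r ∅ = 0 →
    (∀ A B : Finset α, A ⊆ B → r A ≤ r B) →
    (∀ (e : α) (A : Finset α), r (insert e A) ≤ r A + 1) →
    (∀ A B : Finset α, r (A ∪ B) + r (A ∩ B) ≤ r A + r B) →
    r X = n →
    0 ≤ (-1 : ℤ) ^ n * ∑ A ∈ X.powerset, (-1 : ℤ) ^ A.card * r A := by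
  intro N
  induction N with
  | zero =>
    intro X hX r n h0 hmono hstep hsub hn
    rw [Finset.card_eq_zero.mp (Nat.le_zero.mp hX)] at hn ⊢
    simp [h0]
  | succ N ih =>
    intro X hX r n h0 hmono hstep hsub hn
    rcases X.eq_empty_or_nonempty with rfl | ⟨e, he⟩
    · simp [h0]
    obtain ⟨X', hX'def⟩ : ∃ X', X' = X.erase e := ⟨_, rfl⟩
    have heX' : e ∉ X' := hX'def ▸ Finset.notMem_erase e X
    have hins : X = insert e X' := by rw [hX'def, Finset.insert_erase he]
    have hcard' : X'.card ≤ N := by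
      have h1 : (X.erase e).card = X.card - 1 := Finset.card_erase_of_mem he
      have h2 : 1 ≤ X.card := Finset.card_pos.mpr ⟨e, he⟩
      rw [hX'def]
      omega
    have hsum : ∑ A ∈ X.powerset, (-1 : ℤ) ^ A.card * r A
        = ∑ A ∈ X'.powerset, (-1 : ℤ) ^ A.card * (r A - r (insert e A)) := by
      rw [hins, Finset.sum_powerset_insert heX']
      rw [← Finset.sum_add_distrib]
      refine Finset.sum_congr rfl fun A hA => ?_
      have heA : e ∉ A := fun h => heX' (Finset.mem_powerset.mp hA h)
      rw [Finset.card_insert_of_notMem heA]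
      ring
    rw [hsum]
    have hre : r {e} = 0 ∨ r {e} = 1 := by
      have h1 : r ∅ ≤ r {e} := hmono _ _ (Finset.empty_subset _)
      have h2 : r {e} ≤ r ∅ + 1 := by
        have := hstep e ∅; simpa using this
      omega
    rcases hre with hre | hre
    · -- loop : every term vanishes
      have hzero : ∀ A ∈ X'.powerset, (-1 : ℤ) ^ A.card * (r A - r (insert e A)) = 0 := by
        intro A hA
        have heA : e ∉ A := fun h => heX' (Finset.mem_powerset.mp hA h)
        have h1 : r (insert e A) ≤ r A := by
          have hs := hsub A {e}
          rw [Finset.inter_singleton_of_notMem heA, union_singleton_eq_insert, h0, hre] at hs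
          omega
        have h2 : r A ≤ r (insert e A) := hmono _ _ (Finset.subset_insert e A)
        have h3 : r A - r (insert e A) = 0 := by omega
        rw [h3, mul_zero]
      rw [Finset.sum_congr rfl hzero]
      simp
    · rcases X'.eq_empty_or_nonempty with hX'e | hX'ne
      · -- X = {e}
        have hn1 : (n : ℤ) = 1 := by
          rw [← hn, hins, hX'e]; simpa using hre
        have hn1' : n = 1 := by exact_mod_cast hn1
        subst hn1'
        rw [hX'e]
        simp [h0, hre]
      · -- X' nonempty
        have hrX'le : r X' ≤ n := by
          rw [← hn]; exact hmono _ _ (by rw [hX'def]; exact Finset.erase_subset e X)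
        have hrX'ge : (n : ℤ) ≤ r X' + 1 := by
          rw [← hn, hins]; exact hstep e X'
        rcases (by omega : r X' = (n : ℤ) - 1 ∨ r X' = (n : ℤ)) with hcol | hdel
        · -- e is a coloop: each difference is -1, sum is 0
          have hone : ∀ A ∈ X'.powerset, (-1 : ℤ) ^ A.card * (r A - r (insert e A))
              = -(-1 : ℤ) ^ A.card := by
            intro A hA
            have hA' : A ⊆ X' := Finset.mem_powerset.mp hA
            have heA : e ∉ A := fun h => heX' (hA' h)
            have h1 : r (insert e A) ≤ r A + 1 := hstep e A
            have h2 : r A + 1 ≤ r (insert e A) := by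
              have hs := hsub (insert e A) X'
              rw [Finset.insert_union, Finset.union_eq_right.mpr hA', ← hins,
                Finset.insert_inter_of_notMem heX', Finset.inter_eq_left.mpr hA',
                hn, hcol] at hs
              omega
            have h3 : r A - r (insert e A) = -1 := by omega
            rw [h3]; ring
          rw [Finset.sum_congr rfl hone, Finset.sum_neg_distrib,
            Finset.sum_powerset_neg_one_pow_card_of_nonempty hX'ne]
          simp
        · -- deletion-contraction
          obtain ⟨m, rfl⟩ : ∃ m, n = m + 1 := by
            have h1 : r {e} ≤ r X := hmono _ _ (by
              rw [hins]; exact Finset.singleton_subset_iff.mpr (Finset.mem_insert_self e X'))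
            rw [hn, hre] at h1
            have : 1 ≤ n := by exact_mod_cast h1
            exact ⟨n - 1, by omega⟩
          -- the contraction rank function
          set rc : Finset α → ℤ := fun A => r (A ∪ {e}) - 1 with hrc
          have hdelIH : 0 ≤ (-1 : ℤ) ^ (m + 1) * ∑ A ∈ X'.powerset, (-1 : ℤ) ^ A.card * r A := by
            refine ih X' hcard' r (m + 1) h0 hmono hstep hsub ?_
            rw [hdel]
          have hctrIH : 0 ≤ (-1 : ℤ) ^ m * ∑ A ∈ X'.powerset, (-1 : ℤ) ^ A.card * rc A := by
            refine ih X' hcard' rc m ?_ ?_ ?_ ?_ ?_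
            · simp only [hrc, Finset.empty_union]
              rw [hre]; ring
            · intro A B hAB
              exact sub_le_sub_right (hmono _ _ (Finset.union_subset_union_left hAB)) 1
            · intro f A
              simp only [hrc]
              have : insert f A ∪ {e} = insert f (A ∪ {e}) := by
                rw [Finset.insert_union]
              rw [this]
              have := hstep f (A ∪ {e})
              omega
            · intro A B
              simp only [hrc]
              have h1 : (A ∪ {e}) ∪ (B ∪ {e}) = (A ∪ B) ∪ {e} := by
                ext x; simp only [Finset.mem_union]; tauto
              have h2 : (A ∪ {e}) ∩ (B ∪ {e}) = (A ∩ B) ∪ {e} := by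
                ext x; simp only [Finset.mem_union, Finset.mem_inter]; tauto
              have hs := hsub (A ∪ {e}) (B ∪ {e})
              rw [h1, h2] at hs
              omega
            · simp only [hrc]
              have : X' ∪ {e} = X := by
                rw [union_singleton_eq_insert, ← hins]
              rw [this, hn]
              push_cast
              ring
          have hterm : ∀ A ∈ X'.powerset, (-1 : ℤ) ^ A.card * (r A - r (insert e A))
              = (-1 : ℤ) ^ A.card * r A - (-1 : ℤ) ^ A.card * rc A - (-1 : ℤ) ^ A.card := by
            intro A hA
            have : insert e A = A ∪ {e} := (union_singleton_eq_insert A e).symm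
            rw [this]
            simp only [hrc]
            ring
          rw [Finset.sum_congr rfl hterm, Finset.sum_sub_distrib, Finset.sum_sub_distrib,
            Finset.sum_powerset_neg_one_pow_card_of_nonempty hX'ne, sub_zero, mul_sub]
          have hsign : (-1 : ℤ) ^ (m + 1) * -(1 : ℤ) = (-1 : ℤ) ^ m := by
            rw [pow_succ]; ring
          have : (-1 : ℤ) ^ (m + 1) * ∑ A ∈ X'.powerset, (-1 : ℤ) ^ A.card * rc A
              = -((-1 : ℤ) ^ m * ∑ A ∈ X'.powerset, (-1 : ℤ) ^ A.card * rc A) := by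
            rw [pow_succ]; ring
          rw [this]
          linarith


end AbstractLemma

section RankLemmas

variable {α : Type*} {M : Matroid α}

variable {α : Type*} {M : Matroid α}

lemma rk'_inter_ground (M : Matroid α) (A : Set α) : M.rk' A = M.rk' (A ∩ M.E) := by
  unfold Matroid.rk'; congr 1; ext n; constructor <;> rintro ⟨I, hIA, hI, rfl⟩
  · exact ⟨I, Set.subset_inter hIA hI.subset_ground, hI, rfl⟩
  · exact ⟨I, hIA.trans Set.inter_subset_left, hI, rfl⟩

lemma ncard_le_ncard_of_basis (hfin : M.E.Finite) {I J Y : Set α}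
    (hI : M.IsBasis I Y) (hJ : M.Indep J) (hJY : J ⊆ Y) : J.ncard ≤ I.ncard := by
  by_contra hlt
  push_neg at hlt
  have hIfin : I.Finite := hfin.subset hI.indep.subset_ground
  have hJfin : J.Finite := hfin.subset hJ.subset_ground
  have henc : I.encard < J.encard := by
    rw [← hIfin.cast_ncard_eq, ← hJfin.cast_ncard_eq]
    exact_mod_cast hlt
  obtain ⟨e, heJI, hins⟩ := hI.indep.augment hJ henc
  have heY : e ∈ Y := hJY heJI.1
  have := hI.eq_of_subset_indep hins (Set.subset_insert e I)
    (Set.insert_subset heY hI.subset)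
  exact heJI.2 (by rw [this]; exact Set.mem_insert e I)

/-- rk' equals the cardinality of any basis. -/
lemma rk'_eq_basis (hfin : M.E.Finite) {I Y : Set α} (hI : M.IsBasis I Y) :
    M.rk' Y = I.ncard := by
  refine IsGreatest.csSup_eq ⟨⟨I, hI.subset, hI.indep, rfl⟩, ?_⟩
  rintro n ⟨J, hJY, hJ, rfl⟩
  exact ncard_le_ncard_of_basis hfin hI hJ hJY

/-- rk' as max: existence form. -/
lemma exists_basis_rk' (hfin : M.E.Finite) (A : Set α) :
    ∃ I, M.Indep I ∧ I ⊆ A ∧ M.IsBasis I (A ∩ M.E) ∧ M.rk' A = I.ncard := by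
  obtain ⟨I, hI⟩ := M.exists_isBasis (A ∩ M.E) Set.inter_subset_right
  exact ⟨I, hI.indep, hI.subset.trans Set.inter_subset_left, hI,
    by rw [rk'_inter_ground, rk'_eq_basis hfin hI]⟩

lemma rk'_upper (hfin : M.E.Finite) {J A : Set α} (hJ : M.Indep J) (hJA : J ⊆ A) :
    J.ncard ≤ M.rk' A := by
  obtain ⟨I, _, _, hIb, hrk⟩ := exists_basis_rk' hfin A
  rw [hrk]
  exact ncard_le_ncard_of_basis hfin hIb hJ (Set.subset_inter hJA hJ.subset_ground)

lemma rk'_empty (hfin : M.E.Finite) : M.rk' ∅ = 0 := by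
  obtain ⟨I, _, hIA, _, hrk⟩ := exists_basis_rk' hfin (∅ : Set α)
  rw [hrk, Set.subset_empty_iff.mp hIA]
  simp

lemma rk'_mono (hfin : M.E.Finite) {A B : Set α} (hAB : A ⊆ B) : M.rk' A ≤ M.rk' B := by
  obtain ⟨I, hI, hIA, _, hrk⟩ := exists_basis_rk' hfin A
  rw [hrk]
  exact rk'_upper hfin hI (hIA.trans hAB)

lemma rk'_insert_le (hfin : M.E.Finite) (A : Set α) (e : α) :
    M.rk' (insert e A) ≤ M.rk' A + 1 := by
  obtain ⟨I, hI, hIA, _, hrk⟩ := exists_basis_rk' hfin (insert e A)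
  rw [hrk]
  have hIfin : I.Finite := hfin.subset hI.subset_ground
  have h1 : (I \ {e}).ncard ≤ M.rk' A := by
    refine rk'_upper hfin (hI.subset Set.diff_subset) ?_
    intro x hx
    rcases hIA hx.1 with h | h
    · exact absurd h hx.2
    · exact h
  have h2 : I.ncard ≤ (I \ {e}).ncard + 1 := by
    by_cases he : e ∈ I
    · rw [Set.ncard_diff_singleton_add_one he hIfin]
    · rw [Set.diff_singleton_eq_self he]
      omega
  omega

lemma rk'_submodular (hfin : M.E.Finite) (A B : Set α) :
    M.rk' (A ∪ B) + M.rk' (A ∩ B) ≤ M.rk' A + M.rk' B := by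
  obtain ⟨I, hIi, _, hIb, hrkI⟩ := exists_basis_rk' hfin (A ∩ B)
  have hIsub : I ⊆ (A ∪ B) ∩ M.E := fun x hx => by
    have h := hIb.subset hx
    exact ⟨Or.inl h.1.1, h.2⟩
  obtain ⟨J, hJ, hIJ⟩ := hIi.subset_isBasis_of_subset hIsub Set.inter_subset_right
  have hrkU : M.rk' (A ∪ B) = J.ncard := by
    rw [rk'_inter_ground, rk'_eq_basis hfin hJ]
  have hJfin : J.Finite := hfin.subset hJ.indep.subset_ground
  have hJA : (J ∩ A).ncard ≤ M.rk' A :=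
    rk'_upper hfin (hJ.indep.subset Set.inter_subset_left) Set.inter_subset_right
  have hJB : (J ∩ B).ncard ≤ M.rk' B :=
    rk'_upper hfin (hJ.indep.subset Set.inter_subset_left) Set.inter_subset_right
  have hsum : (J ∩ A).ncard + (J ∩ B).ncard = J.ncard + (J ∩ (A ∩ B)).ncard := by
    have h1 : (J ∩ A) ∪ (J ∩ B) = J ∩ (A ∪ B) := (Set.inter_union_distrib_left J A B).symm
    have h2 : (J ∩ A) ∩ (J ∩ B) = J ∩ (A ∩ B) := by
      ext x; simp only [Set.mem_inter_iff]; tauto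
    have h3 : J ∩ (A ∪ B) = J := by
      refine Set.inter_eq_left.mpr ?_
      exact hJ.subset.trans Set.inter_subset_left
    rw [← Set.ncard_union_add_ncard_inter (J ∩ A) (J ∩ B) (hJfin.subset Set.inter_subset_left)
      (hJfin.subset Set.inter_subset_left), h1, h2, h3]
  have hIle : I.ncard ≤ (J ∩ (A ∩ B)).ncard := by
    refine Set.ncard_le_ncard ?_ (hJfin.subset Set.inter_subset_left)
    exact Set.subset_inter hIJ (hIb.subset.trans Set.inter_subset_left)
  rw [hrkU, hrkI]
  omega

lemma rk'_closure (hfin : M.E.Finite) (A : Set α) : M.rk' (M.closure A) = M.rk' A := by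
  obtain ⟨I, hIi, _, hIb, hrkI⟩ := exists_basis_rk' hfin A
  have hcl : M.IsBasis I (M.closure A) := by
    have := hIb.isBasis_closure_right
    rwa [Matroid.closure_inter_ground] at this
  rw [rk'_eq_basis hfin hcl, hrkI]

lemma rk'_ground_diff_loops (hfin : M.E.Finite) :
    M.rk' (M.E \ M.closure ∅) = M.rk' M.E := by
  obtain ⟨I, hI⟩ := M.exists_isBasis M.E subset_rfl
  have hIsub : I ⊆ M.E \ M.closure ∅ := by
    intro x hx
    refine ⟨hI.indep.subset_ground hx, fun hxl => ?_⟩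
    have := hI.indep.notMem_closure_diff_of_mem hx
    exact this (M.closure_subset_closure (Set.empty_subset _) hxl)
  rw [rk'_eq_basis hfin hI, rk'_eq_basis hfin (hI.isBasis_subset hIsub Set.diff_subset)]

lemma closure_flat' (M : Matroid α) (A : Set α) : M.IsFlat (M.closure A) := by
  refine ⟨fun I Y hIcl hIY => ?_, M.closure_subset_ground A⟩
  have h1 : M.closure I = M.closure A := hIcl.closure_eq_right
  exact (hIY.subset_closure).trans (h1 ▸ subset_rfl)


end RankLemmas

section Mobius

variable {α : Type*} {M : Matroid α}




variable (Flats : Finset (Set α)) (hFlats : ∀ F : Set α, F ∈ Flats ↔ M.IsFlat F)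
  (X : Finset α) (hX : (↑X : Set α) = M.E \ M.closure ∅)

/-- The candidate Möbius values: signed counts of spanning subsets of nonloops. -/
noncomputable def mobF (M : Matroid α) (X : Finset α) (F : Set α) : ℤ :=
  ∑ A ∈ X.powerset.filter (fun A : Finset α => M.closure ↑A = F), (-1 : ℤ) ^ A.card

include hFlats in
lemma flats_contain_loops {F : Set α} (hF : F ∈ Flats) : M.closure ∅ ⊆ F := by
  have hflat := (hFlats F).mp hF
  have := M.closure_subset_closure (Set.empty_subset F)
  rwa [hflat.closure] at this

include hFlats hX in
lemma sum_mobF (F : Set α) (hF : F ∈ Flats) :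
    ∑ G ∈ Flats.filter (fun G => G ⊆ F), mobF M X G
      = if F = M.closure ∅ then 1 else 0 := by
  have hFflat := (hFlats F).mp hF
  set P := X.powerset.filter (fun A : Finset α => (↑A : Set α) ⊆ F) with hP
  have hmap : ∀ A : Finset α, A ∈ P → (fun B : Finset α => M.closure (↑B : Set α)) A
      ∈ Flats.filter (fun G => G ⊆ F) := by
    intro A hA
    rw [Finset.mem_filter] at hA ⊢
    refine ⟨(hFlats _).mpr (closure_flat' M _), ?_⟩
    have := M.closure_subset_closure hA.2
    rwa [hFflat.closure] at this
  have hfib := Finset.sum_fiberwise_of_maps_to hmap (fun A : Finset α => (-1 : ℤ) ^ A.card)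
  have hfG : ∀ G ∈ Flats.filter (fun G => G ⊆ F), mobF M X G
      = ∑ A ∈ P.filter (fun A : Finset α => M.closure ↑A = G), (-1 : ℤ) ^ A.card := by
    intro G hG
    rw [Finset.mem_filter] at hG
    unfold mobF
    congr 1
    rw [hP, Finset.filter_filter]
    refine Finset.filter_congr fun A hA => ?_
    rw [Finset.mem_powerset] at hA
    constructor
    · intro hcl
      have hAE : (↑A : Set α) ⊆ M.E := by
        refine subset_trans ?_ (Set.diff_subset (s := M.E) (t := M.closure ∅))
        rw [← hX]; exact_mod_cast hA
      have h1 : (↑A : Set α) ⊆ M.closure ↑A := M.subset_closure _ hAE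
      exact ⟨h1.trans (hcl ▸ hG.2), hcl⟩
    · exact fun h => h.2
  rw [Finset.sum_congr rfl hfG, hfib]
  have hPP : P = (X.filter (fun a => a ∈ F)).powerset := by
    ext A
    rw [hP, Finset.mem_filter, Finset.mem_powerset, Finset.mem_powerset]
    constructor
    · rintro ⟨hAX, hAF⟩ x hx
      exact Finset.mem_filter.mpr ⟨hAX hx, hAF hx⟩
    · intro h
      refine ⟨fun x hx => (Finset.mem_filter.mp (h hx)).1, fun x hx => ?_⟩
      exact (Finset.mem_filter.mp (h (Finset.mem_coe.mp hx))).2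
  rw [hPP, Finset.sum_powerset_neg_one_pow_card]
  refine if_congr ?_ rfl rfl
  rw [Finset.filter_eq_empty_iff]
  constructor
  · intro h
    refine subset_antisymm ?_ (flats_contain_loops Flats hFlats hF)
    intro x hxF
    by_contra hxL
    have hxE : x ∈ M.E := hFflat.subset_ground hxF
    have hxX : x ∈ X := by
      rw [← Finset.mem_coe, hX]; exact ⟨hxE, hxL⟩
    exact h hxX hxF
  · intro h a haX
    rw [← Finset.mem_coe, hX] at haX
    rw [h]
    exact haX.2

include hFlats in
lemma sum_mu (μ : Set α → Set α → ℤ) (hμ : IsMobiusOn Flats μ) (F : Set α) (hF : F ∈ Flats) :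
    ∑ G ∈ Flats.filter (fun G => G ⊆ F), μ (M.closure ∅) G
      = if F = M.closure ∅ then 1 else 0 := by
  have hLmem : M.closure ∅ ∈ Flats := (hFlats _).mpr (closure_flat' M ∅)
  by_cases hFL : F = M.closure ∅
  · have hsingle : Flats.filter (fun G => G ⊆ F) = {F} := by
      ext G
      rw [Finset.mem_filter, Finset.mem_singleton]
      constructor
      · rintro ⟨hG, hGF⟩
        refine subset_antisymm (hGF.trans_eq hFL) (flats_contain_loops Flats hFlats hG) |>.trans hFL.symm
      · rintro rfl; exact ⟨hF, subset_rfl⟩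
    rw [hsingle, Finset.sum_singleton, ← hFL, hμ.1 F hF]
    simp
  · have hss : M.closure ∅ ⊂ F :=
      HasSubset.Subset.ssubset_of_ne (flats_contain_loops Flats hFlats hF)
        (fun h => hFL h.symm)
    have h0 := hμ.2.1 _ hLmem F hF hss
    rw [if_neg hFL, ← h0]
    refine Finset.sum_congr ?_ fun _ _ => rfl
    refine Finset.filter_congr fun G hG => ?_
    simp [flats_contain_loops Flats hFlats hG]

include hFlats hX in
lemma mobF_eq_mu (μ : Set α → Set α → ℤ) (hμ : IsMobiusOn Flats μ) :
    ∀ F ∈ Flats, mobF M X F = μ (M.closure ∅) F := by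
  suffices h : ∀ (k : ℕ) (F : Set α), F ∈ Flats →
      (Flats.filter (fun G => G ⊂ F)).card ≤ k → mobF M X F = μ (M.closure ∅) F by
    intro F hF; exact h _ F hF le_rfl
  intro k
  induction k with
  | zero =>
    intro F hF hcard
    have hemp : Flats.filter (fun G => G ⊂ F) = ∅ :=
      Finset.card_eq_zero.mp (Nat.le_zero.mp hcard)
    have hsplit : Flats.filter (fun G => G ⊆ F) = insert F (Flats.filter (fun G => G ⊂ F)) := by
      ext G
      rw [Finset.mem_filter, Finset.mem_insert, Finset.mem_filter]
      constructor
      · rintro ⟨hG, hGF⟩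
        rcases eq_or_ne G F with rfl | hne
        · exact Or.inl rfl
        · exact Or.inr ⟨hG, hGF.ssubset_of_ne hne⟩
      · rintro (rfl | ⟨hG, hGF⟩)
        · exact ⟨hF, subset_rfl⟩
        · exact ⟨hG, hGF.subset⟩
    have h1 := sum_mobF Flats hFlats X hX F hF
    have h2 := sum_mu Flats hFlats μ hμ F hF
    rw [hsplit, Finset.sum_insert (by simp [hemp]), hemp] at h1 h2
    simp only [Finset.sum_empty, add_zero] at h1 h2
    rw [h1, h2]
  | succ k ih =>
    intro F hF hcard
    have hsplit : Flats.filter (fun G => G ⊆ F) = insert F (Flats.filter (fun G => G ⊂ F)) := by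
      ext G
      rw [Finset.mem_filter, Finset.mem_insert, Finset.mem_filter]
      constructor
      · rintro ⟨hG, hGF⟩
        rcases eq_or_ne G F with rfl | hne
        · exact Or.inl rfl
        · exact Or.inr ⟨hG, hGF.ssubset_of_ne hne⟩
      · rintro (rfl | ⟨hG, hGF⟩)
        · exact ⟨hF, subset_rfl⟩
        · exact ⟨hG, hGF.subset⟩
    have hFnot : F ∉ Flats.filter (fun G => G ⊂ F) := by
      simp only [Finset.mem_filter]
      rintro ⟨-, h⟩; exact h.ne rfl
    have h1 := sum_mobF Flats hFlats X hX F hF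
    have h2 := sum_mu Flats hFlats μ hμ F hF
    rw [hsplit, Finset.sum_insert hFnot] at h1 h2
    have hinner : ∑ G ∈ Flats.filter (fun G => G ⊂ F), mobF M X G
        = ∑ G ∈ Flats.filter (fun G => G ⊂ F), μ (M.closure ∅) G := by
      refine Finset.sum_congr rfl fun G hG => ?_
      rw [Finset.mem_filter] at hG
      refine ih G hG.1 ?_
      have hsub2 : Flats.filter (fun H => H ⊂ G) ⊆ Flats.filter (fun H => H ⊂ F) := by
        intro H hH
        rw [Finset.mem_filter] at hH ⊢
        exact ⟨hH.1, hH.2.trans hG.2⟩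
      have hssub : Flats.filter (fun H => H ⊂ G) ⊂ Flats.filter (fun H => H ⊂ F) := by
        refine (Finset.ssubset_iff_of_subset hsub2).mpr ?_
        exact ⟨G, Finset.mem_filter.mpr ⟨hG.1, hG.2⟩, by
          simp only [Finset.mem_filter]; rintro ⟨-, h⟩; exact h.ne rfl⟩
      have := Finset.card_lt_card hssub
      omega
    rw [hinner] at h1
    rw [← h2] at h1
    omega

end Mobius

/-- For every matroid `M`, the beta invariant `β(M)` is nonnegative. -/
theorem beta_nonneg {α : Type*} (M : Matroid α) (hfin : M.E.Finite)
    (Flats : Finset (Set α)) (hFlats : ∀ F : Set α, F ∈ Flats ↔ M.IsFlat F)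
    (μ : Set α → Set α → ℤ) (hμ : IsMobiusOn Flats μ) :
    0 ≤ betaInv M Flats μ := by
  classical
  set X : Finset α := (hfin.diff (t := M.closure ∅)).toFinset with hXdef
  have hX : (↑X : Set α) = M.E \ M.closure ∅ := Set.Finite.coe_toFinset _
  have hmain : ∑ F ∈ Flats, μ (M.closure ∅) F * (M.rk' F : ℤ)
      = ∑ A ∈ X.powerset, (-1 : ℤ) ^ A.card * (M.rk' ↑A : ℤ) := by
    have h1 : ∀ F ∈ Flats, μ (M.closure ∅) F * (M.rk' F : ℤ)
        = ∑ A ∈ X.powerset.filter (fun A : Finset α => M.closure ↑A = F),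
            (-1 : ℤ) ^ A.card * (M.rk' ↑A : ℤ) := by
      intro F hF
      rw [← mobF_eq_mu Flats hFlats X hX μ hμ F hF]
      unfold mobF
      rw [Finset.sum_mul]
      refine Finset.sum_congr rfl fun A hA => ?_
      rw [Finset.mem_filter] at hA
      rw [← hA.2, rk'_closure hfin]
    rw [Finset.sum_congr rfl h1]
    have hmap : ∀ A : Finset α, A ∈ X.powerset →
        (fun B : Finset α => M.closure (↑B : Set α)) A ∈ Flats := by
      intro A _
      exact (hFlats _).mpr (closure_flat' M _)
    exact Finset.sum_fiberwise_of_maps_to hmap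
      (fun A : Finset α => (-1 : ℤ) ^ A.card * (M.rk' ↑A : ℤ))
  unfold betaInv
  rw [hmain]
  have hn : M.rk' ↑X = M.rk' M.E := by
    rw [hX]; exact rk'_ground_diff_loops hfin
  refine abstract_nonneg X.card X le_rfl (fun A => (M.rk' ↑A : ℤ)) (M.rk' M.E)
    ?_ ?_ ?_ ?_ ?_
  · simp only [Finset.coe_empty]
    rw [rk'_empty hfin]
    rfl
  · intro A B hAB
    show ((M.rk' (↑A : Set α) : ℕ) : ℤ) ≤ ((M.rk' (↑B : Set α) : ℕ) : ℤ)
    exact_mod_cast rk'_mono hfin (by exact_mod_cast hAB : (↑A : Set α) ⊆ ↑B)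
  · intro e A
    show ((M.rk' (↑(insert e A) : Set α) : ℕ) : ℤ) ≤ ((M.rk' (↑A : Set α) : ℕ) : ℤ) + 1
    have h := rk'_insert_le hfin (↑A : Set α) e
    rw [Finset.coe_insert]
    exact_mod_cast h
  · intro A B
    show ((M.rk' (↑(A ∪ B) : Set α) : ℕ) : ℤ) + ((M.rk' (↑(A ∩ B) : Set α) : ℕ) : ℤ)
        ≤ ((M.rk' (↑A : Set α) : ℕ) : ℤ) + ((M.rk' (↑B : Set α) : ℕ) : ℤ)
    have h := rk'_submodular hfin (↑A : Set α) (↑B : Set α)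
    rw [Finset.coe_union, Finset.coe_inter]
    exact_mod_cast h
  · show ((M.rk' (↑X : Set α) : ℕ) : ℤ) = ((M.rk' M.E : ℕ) : ℤ)
    exact_mod_cast hn
end

section
/- For an ordered matroid M of rank r, the broken circuit complex BC(M) is a pure simplicial complex of dimension r-1: every face of BC(M) is contained in a face of cardinality r, and every face of BC(M) is independent in M. -/
open scoped Matroid

/-- A broken circuit of an ordered matroid: a circuit with its smallest element removed. -/
def Matroid.BrokenCircuit {α : Type*} [LinearOrder α] (M : Matroid α) (B : Set α) : Prop :=
  ∃ C : Set α, ∃ m : α, M.MCircuit C ∧ m ∈ C ∧ (∀ x ∈ C, m ≤ x) ∧ B = C \ {m}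

/-- `F` is a face of the broken circuit complex `BC(M)`: a subset of the ground set
containing no broken circuit. -/
def Matroid.BCface {α : Type*} [LinearOrder α] (M : Matroid α) (F : Set α) : Prop :=
  F ⊆ M.E ∧ ∀ B : Set α, M.BrokenCircuit B → ¬ B ⊆ F

/-- `F` is a face of the reduced broken circuit complex `BC̄(M)` (with `one` the least
element of the ground set): a subset of `M.E \ {one}` containing no broken circuit. -/
def Matroid.redBCface {α : Type*} [LinearOrder α] (M : Matroid α) (one : α)
    (F : Set α) : Prop :=
  F ⊆ M.E \ {one} ∧ ∀ B : Set α, M.BrokenCircuit B → ¬ B ⊆ F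

section Aux
open Set
variable {α : Type*} [LinearOrder α] {M : Matroid α} {C F : Set α} {e : α}
lemma exists_mincircuit_aux (hfin : M.E.Finite) : ∀ n : ℕ, ∀ X : Set α, X.ncard = n → X ⊆ M.E →
    ¬ M.Indep X → ∃ C ⊆ X, M.MCircuit C := by
  intro n
  induction n using Nat.strong_induction_on with
  | _ n ih =>
    intro X hn hX hd
    by_cases h : ∀ D, D ⊂ X → M.Indep D
    · exact ⟨X, Subset.rfl, hX, hd, h⟩
    · push_neg at h
      obtain ⟨D, hDX, hDdep⟩ := h
      obtain ⟨C, hCD, hC⟩ := ih D.ncard (by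
        rw [← hn]; exact Set.ncard_lt_ncard hDX (hfin.subset hX)) D rfl
        (hDX.subset.trans hX) hDdep
      exact ⟨C, hCD.trans hDX.subset, hC⟩

lemma Matroid.MCircuit.mem_closure_diff (hC : M.MCircuit C) (he : e ∈ C) :
    e ∈ M.closure (C \ {e}) := by
  have hind : M.Indep (C \ {e}) :=
    hC.2.2 _ (Set.sdiff_singleton_ssubset.2 he)
  rw [hind.mem_closure_iff]
  refine Or.inl ?_
  rw [Set.insert_diff_singleton, Set.insert_eq_of_mem he]
  exact ⟨hC.2.1, hC.1⟩

/-- A face of the broken circuit complex is independent. -/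
lemma Matroid.BCface.indep (hfin : M.E.Finite) (hF : M.BCface F) : M.Indep F := by
  by_contra hd
  obtain ⟨C, hCF, hC⟩ := exists_mincircuit_aux hfin F.ncard F rfl hF.1 hd
  have hCne : C.Nonempty := by
    rcases C.eq_empty_or_nonempty with h | h
    · exact absurd (h ▸ M.empty_indep) hC.2.1
    · exact h
  obtain ⟨m, hmC, hmin⟩ := Set.exists_min_image C id (hfin.subset (hC.1)) hCne
  exact hF.2 _ ⟨C, m, hC, hmC, hmin, rfl⟩ ((diff_subset).trans hCF)

/-- The augmentation step. -/
lemma Matroid.BCface.step (hfin : M.E.Finite) (hF : M.BCface F) (hFi : M.Indep F)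
    (hns : M.closure F ≠ M.E) :
    ∃ e ∈ M.E \ M.closure F, M.BCface (insert e F) ∧ M.Indep (insert e F) := by
  have hne : (M.E \ M.closure F).Nonempty := by
    rw [Set.diff_nonempty]
    exact fun h => hns (subset_antisymm (M.closure_subset_ground F) h)
  obtain ⟨e, heE, hemin⟩ := Set.exists_min_image _ id (hfin.subset diff_subset) hne
  refine ⟨e, heE, ⟨insert_subset heE.1 hF.1, ?_⟩, ?_⟩
  · rintro B ⟨C, m, hC, hmC, hmmin, rfl⟩ hBF
    by_cases heB : e ∈ C \ {m}
    swap
    · -- B ⊆ F, contradiction with hF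
      exact hF.2 _ ⟨C, m, hC, hmC, hmmin, rfl⟩ (fun x hx => by
        rcases hBF hx with h | h
        · exact absurd (h ▸ hx) heB
        · exact h)
    -- e ∈ C, m < e; show C \ {e} ⊆ insert m F
    have hme : m ≠ e := fun h => heB.2 (h ▸ rfl)
    have hCmF : C \ {e} ⊆ insert m F := by
      rintro x ⟨hxC, hxe⟩
      by_cases hxm : x = m
      · exact hxm ▸ mem_insert m F
      · rcases hBF ⟨hxC, hxm⟩ with h | h
        · exact absurd h hxe
        · exact Or.inr h
    have hmcl : m ∈ M.closure F := by
      by_contra hm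
      have : e ≤ m := hemin m ⟨hC.1 hmC, hm⟩
      exact hme (le_antisymm (hmmin e heB.1) this)
    have he' : e ∈ M.closure F := by
      have h1 : e ∈ M.closure (C \ {e}) := hC.mem_closure_diff heB.1
      have h2 : M.closure (C \ {e}) ⊆ M.closure (insert m F) :=
        M.closure_subset_closure hCmF
      rw [Matroid.closure_insert_eq_of_mem_closure hmcl] at h2; exact h2 h1
    exact heE.2 he'
  · rw [hFi.insert_indep_iff]
    exact Or.inl heE

lemma BCface.exists_base_superset (hfin : M.E.Finite) :
    ∀ n : ℕ, ∀ F : Set α, M.BCface F → M.Indep F → (M.E \ M.closure F).ncard ≤ n →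
    ∃ F', F ⊆ F' ∧ M.BCface F' ∧ M.IsBase F' := by
  intro n
  induction n with
  | zero =>
    intro F hF hFi hcard
    have h0 : M.E \ M.closure F = ∅ := by
      rw [← Set.ncard_eq_zero (hfin.subset diff_subset)]
      omega
    have hsp : M.closure F = M.E :=
      subset_antisymm (M.closure_subset_ground F) (by
        intro x hx; by_contra hxc; exact (h0 ▸ (Set.mem_diff x).2 ⟨hx, hxc⟩ : x ∈ (∅ : Set α)))
    exact ⟨F, Subset.rfl, hF, hFi.isBase_of_ground_subset_closure hsp.symm.subset⟩
  | succ n ih =>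
    intro F hF hFi hcard
    by_cases hsp : M.closure F = M.E
    · exact ⟨F, Subset.rfl, hF, hFi.isBase_of_ground_subset_closure hsp.symm.subset⟩
    obtain ⟨e, heE, hF', hFi'⟩ := hF.step hfin hFi hsp
    obtain ⟨F', hsub, hface, hbase⟩ := ih (insert e F) hF' hFi' (by
      have hsubs : M.E \ M.closure (insert e F) ⊆ (M.E \ M.closure F) \ {e} := by
        intro x hx
        refine ⟨⟨hx.1, fun hc => hx.2 (M.closure_subset_closure (subset_insert e F) hc)⟩, ?_⟩
        rintro rfl
        exact hx.2 (M.subset_closure _ (insert_subset heE.1 hF.1) (mem_insert x F))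
      have h1 : (M.E \ M.closure (insert e F)).ncard ≤ ((M.E \ M.closure F) \ {e}).ncard :=
        Set.ncard_le_ncard hsubs (hfin.subset (diff_subset.trans diff_subset))
      have h2 : ((M.E \ M.closure F) \ {e}).ncard < (M.E \ M.closure F).ncard :=
        Set.ncard_lt_ncard (Set.sdiff_singleton_ssubset.2 heE) (hfin.subset diff_subset)
      omega)
    exact ⟨F', (subset_insert e F).trans hsub, hface, hbase⟩

theorem BC_pure' (M : Matroid α) (hfin : M.E.Finite)
    (r : ℕ) (hr : M.rk' M.E = r) :
    ∀ F : Set α, M.BCface F →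
      M.Indep F ∧ ∃ F' : Set α, F ⊆ F' ∧ M.BCface F' ∧ F'.ncard = r := by
  intro F hF
  have hFi : M.Indep F := hF.indep hfin
  obtain ⟨F', hsub, hface, hbase⟩ :=
    BCface.exists_base_superset hfin (M.E \ M.closure F).ncard F hF hFi le_rfl
  refine ⟨hFi, F', hsub, hface, ?_⟩
  rw [← hr]
  unfold Matroid.rk'
  have hmem : F'.ncard ∈ {n : ℕ | ∃ I : Set α, I ⊆ M.E ∧ M.Indep I ∧ I.ncard = n} :=
    ⟨F', hbase.subset_ground, hbase.indep, rfl⟩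
  have hub : ∀ n ∈ {n : ℕ | ∃ I : Set α, I ⊆ M.E ∧ M.Indep I ∧ I.ncard = n}, n ≤ F'.ncard := by
    rintro n ⟨I, hIE, hIi, rfl⟩
    obtain ⟨B, hB, hIB⟩ := hIi.exists_isBase_superset
    have : I.ncard ≤ B.ncard := Set.ncard_le_ncard hIB (hfin.subset hB.subset_ground)
    rwa [hB.ncard_eq_ncard_of_isBase hbase] at this
  exact le_antisymm (le_csSup ⟨F'.ncard, hub⟩ hmem) (csSup_le ⟨_, hmem⟩ hub)

end Aux

/-- For an ordered matroid `M` of rank `r`, the broken circuit complex is pure of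
dimension `r - 1`: every face is independent in `M` and is contained in a face of
cardinality `r`. -/
theorem BC_pure {α : Type*} [LinearOrder α] (M : Matroid α) (hfin : M.E.Finite)
    (r : ℕ) (hr : M.rk' M.E = r) :
    ∀ F : Set α, M.BCface F →
      M.Indep F ∧ ∃ F' : Set α, F ⊆ F' ∧ M.BCface F' ∧ F'.ncard = r :=
  BC_pure' M hfin r hr
end

section
/- Let M be an ordered matroid on S with maximum element a that is neither a loop nor a coloop. Then the reduced broken circuit complex of the deletion M\a is the subcomplex of the reduced broken circuit complex of M consisting of all faces not containing a. -/
open scoped Matroid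

/-- Let `M` be an ordered matroid whose maximum element `a` is neither a loop nor a
coloop. The reduced broken circuit complex of the deletion `M \ a` is the subcomplex
of the reduced broken circuit complex of `M` of faces not containing `a`. -/
theorem redBC_deletion {α : Type*} [LinearOrder α] (M : Matroid α) (hfin : M.E.Finite)
    (one : α) (hone : one ∈ M.E) (hmin : ∀ x ∈ M.E, one ≤ x)
    (a : α) (ha : a ∈ M.E) (hmax : ∀ x ∈ M.E, x ≤ a)
    (hloop : M.Indep {a}) (hcoloop : ¬ ∀ B : Set α, M.IsBase B → a ∈ B) :
    ∀ F : Set α, (M ↾ (M.E \ {a})).redBCface one F ↔ M.redBCface one F ∧ a ∉ F := by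
  intro F
  constructor
  · rintro ⟨hFsub, hFB⟩
    rw [Matroid.restrict_ground_eq] at hFsub
    have haF : a ∉ F := fun h => (hFsub h).1.2 rfl
    refine ⟨⟨fun x hx => ⟨(hFsub hx).1.1, (hFsub hx).2⟩, ?_⟩, haF⟩
    rintro B ⟨C, m, ⟨hCE, hCdep, hCmin⟩, hmC, hmmin, rfl⟩ hBF
    have haC : a ∉ C := by
      intro haC
      by_cases h : a = m
      · have hC : C = {a} := by
          apply Set.Subset.antisymm
          · intro x hx
            have h1 := hmmin x hx
            have h2 := hmax x (hCE hx)
            rw [← h] at h1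
            simp [le_antisymm h2 h1]
          · simpa using haC
        exact hCdep (hC ▸ hloop)
      · exact haF (hBF ⟨haC, h⟩)
    have hCE' : C ⊆ M.E \ {a} := fun x hx => ⟨hCE hx, fun hxa => haC (hxa ▸ hx)⟩
    refine hFB (C \ {m}) ⟨C, m, ⟨?_, ?_, ?_⟩, hmC, hmmin, rfl⟩ hBF
    · rw [Matroid.restrict_ground_eq]; exact hCE'
    · rw [Matroid.restrict_indep_iff]; exact fun h => hCdep h.1
    · intro D hD
      rw [Matroid.restrict_indep_iff]
      exact ⟨hCmin D hD, hD.1.trans hCE'⟩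
  · rintro ⟨⟨hFsub, hFB⟩, haF⟩
    refine ⟨?_, ?_⟩
    · rw [Matroid.restrict_ground_eq]
      exact fun x hx => ⟨⟨(hFsub hx).1, fun hxa => haF (hxa ▸ hx)⟩, (hFsub hx).2⟩
    · rintro B ⟨C, m, ⟨hCE, hCdep, hCmin⟩, hmC, hmmin, rfl⟩ hBF
      rw [Matroid.restrict_ground_eq] at hCE
      refine hFB (C \ {m}) ⟨C, m, ⟨fun x hx => (hCE hx).1, ?_, ?_⟩, hmC, hmmin, rfl⟩ hBF
      · intro h
        exact hCdep (Matroid.restrict_indep_iff.mpr ⟨h, hCE⟩)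
      · intro D hD
        exact (Matroid.restrict_indep_iff.mp (hCmin D hD)).1
end
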